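/- Let k ≥ 0, c_L^{eq} > 0, c_S^{eq} > 0, and let c_S, c_L : ℝ → ℝ be differentiable functions satisfying c_S'(t) = k f_L(c_L(t)) f_S(c_S(t)) for all t ≥ 0, where f_L(x) = max(0, (x − c_L^{eq})/c_L^{eq}) and f_S(y) = (c_S^{eq} − y)/c_S^{eq}. If c_S(0) ≤ c_S^{eq}, then c_S(t) ≤ c_S^{eq} for all t ≥ 0; i.e., the solid-phase concentration never exceeds the absorption capacity c_S^{eq} of the wasteform particle. -/
import Mathlib


/-- **The solid-phase concentration never exceeds the absorption capacity.**
With `k ≥ 0`, `c_L^eq > 0`, `c_S^eq > 0`, `c_S' t = k f_L(c_L t) f_S(c_S t)` for all `t ≥ 0`,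
`f_L x = max 0 ((x − c_L^eq)/c_L^eq)` and `f_S y = (c_S^eq − y)/c_S^eq`: if `c_S 0 ≤ c_S^eq`,
then `c_S t ≤ c_S^eq` for all `t ≥ 0`. -/
theorem solid_concentration_le_capacity (k cLeq cSeq : ℝ)
    (hk : 0 ≤ k) (hLeq : 0 < cLeq) (hSeq : 0 < cSeq)
    (cS cL : ℝ → ℝ) (hdS : Differentiable ℝ cS) (hdL : Differentiable ℝ cL)
    (fL fS : ℝ → ℝ)
    (hfL : ∀ x, fL x = max 0 ((x - cLeq) / cLeq))
    (hfS : ∀ y, fS y = (cSeq - y) / cSeq)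
    (hode : ∀ t, 0 ≤ t → deriv cS t = k * fL (cL t) * fS (cS t))
    (h0 : cS 0 ≤ cSeq) :
    ∀ t, 0 ≤ t → cS t ≤ cSeq := by
  intro t0 ht0
  by_contra hgt
  push_neg at hgt
  -- the set of times in [0, t0] where cS ≤ cSeq
  set S : Set ℝ := Set.Icc 0 t0 ∩ cS ⁻¹' Set.Iic cSeq with hS
  have hSne : S.Nonempty := ⟨0, ⟨le_refl 0, ht0⟩, h0⟩
  have hSclosed : IsClosed S :=
    (isClosed_Icc).inter (isClosed_Iic.preimage hdS.continuous)
  have hSbdd : BddAbove S := BddAbove.mono (Set.inter_subset_left) bddAbove_Icc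
  set s := sSup S with hs
  have hsmem : s ∈ S := hSclosed.csSup_mem hSne hSbdd
  have hs0 : 0 ≤ s := hsmem.1.1
  have hst0 : s ≤ t0 := hsmem.1.2
  have hsS : cS s ≤ cSeq := hsmem.2
  have hsne : s ≠ t0 := by
    intro h
    rw [h] at hsS
    linarith
  have hslt : s < t0 := lt_of_le_of_ne hst0 hsne
  -- on (s, t0], cS > cSeq
  have hgtmid : ∀ u ∈ Set.Ioc s t0, cSeq < cS u := by
    intro u hu
    by_contra hle
    push_neg at hle
    have : u ∈ S := ⟨⟨le_trans hs0 hu.1.le, hu.2⟩, hle⟩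
    have := le_csSup hSbdd this
    exact absurd this (not_le.mpr hu.1)
  -- cS is antitone on [s, t0]
  have hanti : AntitoneOn cS (Set.Icc s t0) := by
    apply antitoneOn_of_deriv_nonpos (convex_Icc s t0) hdS.continuous.continuousOn
      (fun u _ => (hdS u).differentiableWithinAt)
    intro u hu
    rw [interior_Icc] at hu
    have hu0 : 0 ≤ u := le_trans hs0 hu.1.le
    have hgtu : cSeq < cS u := hgtmid u ⟨hu.1, hu.2.le⟩
    rw [hode u hu0, hfL, hfS]
    have h1 : 0 ≤ k * max 0 ((cL u - cLeq) / cLeq) :=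
      mul_nonneg hk (le_max_left _ _)
    have h2 : (cSeq - cS u) / cSeq ≤ 0 :=
      div_nonpos_of_nonpos_of_nonneg (by linarith) hSeq.le
    exact mul_nonpos_of_nonneg_of_nonpos h1 h2
  have := hanti ⟨le_refl s, hst0⟩ ⟨hst0, le_refl t0⟩ hst0
  linarith
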